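/- Let z₁,…,zₙ be nonzero complex numbers, 𝒮 = {a₁,…,a_k} a set of complex numbers, and w̃ an optimal solution of maximizing |∑ᵢ wᵢ zᵢ| over wᵢ ∈ 𝒮, with s̃ = ∑ᵢ w̃ᵢ zᵢ ≠ 0. Set δ = arg(s̃). If zᵢ satisfies Re((aⱼ - aₘ) e^{-iδ} zᵢ) > 0 for all m ≠ j (i.e., e^{-iδ}zᵢ lies in the cone Aⱼ), then w̃ᵢ = aⱼ. -/

import Mathlib

/-!
Exchange argument: replacing the single coefficient `w i` by `a j` moves the sum `s` by
`d = (a j - w i) z i`, and `‖s + d‖² = ‖s‖² + 2 Re(conj s · d) + ‖d‖²`. The cone condition says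
exactly that `Re(conj s · d) > 0` whenever `w i ≠ a j`, so the exchange would beat the optimum.
-/

open Finset ComplexConjugate

theorem Finset.sum_update_mul {ι R : Type*} [Fintype ι] [DecidableEq ι] [CommRing R]
    (w z : ι → R) (i : ι) (c : R) :
    ∑ x, Function.update w i c x * z x = ∑ x, w x * z x + (c - w i) * z i := by
  rw [← add_sum_erase _ _ (mem_univ i), ← add_sum_erase _ _ (mem_univ i),
    sum_congr rfl fun x hx => by rw [Function.update_of_ne (ne_of_mem_erase hx)]]
  simp only [Function.update_self]
  ring

theorem norm_lt_norm_add_of_re_inner_pos {𝕜 E : Type*} [RCLike 𝕜] [SeminormedAddCommGroup E]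
    [InnerProductSpace 𝕜 E] {x y : E} (h : 0 < RCLike.re (inner 𝕜 x y)) : ‖x‖ < ‖x + y‖ := by
  refine lt_of_pow_lt_pow_left₀ 2 (norm_nonneg _) ?_
  rw [norm_add_sq (𝕜 := 𝕜)]
  nlinarith [sq_nonneg ‖y‖]

theorem re_conj_sum_mul_nonpos_of_forall_norm_le {ι κ 𝕜 : Type*} [Fintype ι] [RCLike 𝕜]
    (z w : ι → 𝕜) (a : κ → 𝕜) (hw : ∀ x, ∃ j, w x = a j)
    (hopt : ∀ v : ι → 𝕜, (∀ x, ∃ j, v x = a j) → ‖∑ x, v x * z x‖ ≤ ‖∑ x, w x * z x‖)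
    (i : ι) (j : κ) :
    RCLike.re (conj (∑ x, w x * z x) * ((a j - w i) * z i)) ≤ 0 := by
  classical
  have hadm : ∀ x, ∃ l, Function.update w i (a j) x = a l := by
    intro x
    rcases eq_or_ne x i with rfl | hx
    · exact ⟨j, Function.update_self ..⟩
    · simpa only [Function.update_of_ne hx] using hw x
  have hle := hopt _ hadm
  rw [sum_update_mul] at hle
  contrapose! hle
  apply norm_lt_norm_add_of_re_inner_pos (𝕜 := 𝕜)
  rwa [RCLike.inner_apply, mul_comm]

theorem Complex.re_pos_of_re_div_ofReal_pos {x : ℂ} {r : ℝ} (hr : 0 ≤ r) (h : 0 < (x / r).re) :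
    0 < x.re := by
  rw [Complex.div_ofReal_re] at h
  exact ((div_pos_iff.mp h).resolve_right fun hneg => hr.not_gt hneg.2).1

theorem stmt8_general (n k : ℕ) (z : Fin n → ℂ)
    (a : Fin k → ℂ)
    (w : Fin n → ℂ) (hw : ∀ i, ∃ j, w i = a j)
    (hopt : ∀ v : Fin n → ℂ, (∀ i, ∃ j, v i = a j) →
      ‖∑ i, v i * z i‖ ≤ ‖∑ i, w i * z i‖)
    (i : Fin n) (j : Fin k)
    (hcone : ∀ m, m ≠ j →
      0 < ((a j - a m) *
        ((starRingEnd ℂ) (∑ i, w i * z i) / ((‖∑ i, w i * z i‖ : ℝ) : ℂ)) *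
        z i).re) :
    w i = a j := by
  obtain ⟨m, hm⟩ := hw i
  by_contra hne
  have hmj : m ≠ j := by
    rintro rfl
    exact hne hm
  set s := ∑ x, w x * z x
  have hgain : 0 < (conj s * ((a j - w i) * z i)).re := by
    refine Complex.re_pos_of_re_div_ofReal_pos (norm_nonneg s) ?_
    convert hcone m hmj using 2
    rw [hm]
    ring
  exact (re_conj_sum_mul_nonpos_of_forall_norm_le z w a hw hopt i j).not_gt hgain

theorem stmt8 (n k : ℕ) (z : Fin n → ℂ) (hz : ∀ i, z i ≠ 0)
    (a : Fin k → ℂ) (ha : Function.Injective a)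
    (w : Fin n → ℂ) (hw : ∀ i, ∃ j, w i = a j)
    (hopt : ∀ v : Fin n → ℂ, (∀ i, ∃ j, v i = a j) →
      ‖∑ i, v i * z i‖ ≤ ‖∑ i, w i * z i‖)
    (hs : (∑ i, w i * z i) ≠ 0)
    (i : Fin n) (j : Fin k)
    (hcone : ∀ m, m ≠ j →
      0 < ((a j - a m) *
        ((starRingEnd ℂ) (∑ i, w i * z i) / ((‖∑ i, w i * z i‖ : ℝ) : ℂ)) *
        z i).re) :
    w i = a j :=
  stmt8_general n k z a w hw hopt i j hcone
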